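/- Let t ≥ 1 and let c_I : U → ℂ, for multi-indices I with |I| ≤ t−1, be functions differentiable at u₀, and define B : U → ℂ^{N+1} by B(u) := ∑_{|I|≤t−1} c_I(u) x̂^I(u), a differentiable map into the affine cone over the osculating variety Tan^{t−1}(V). Then for every w ∈ ℂ^k the derivative DB(u₀)(w) lies in T^(t)(u₀); i.e., the tangent cone (hence the tangent space) to Tan^{t−1}(V) at the point P is contained in the t-th osculating space T̃^(t)_P(V). -/

import Mathlib

/- Common setup: iterated partial derivatives, multi-indices, osculating spaces,
fundamental forms for a local parametrisation `x : ℂ^k → ℂ^N` of a variety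
`V ⊂ ℙ^N`, lifted to `x̂ = (1, x) : ℂ^k → ℂ^{N+1}`. -/

open scoped BigOperators

noncomputable section

/-- Iterated partial derivative of `f` along a list of coordinate directions. -/
def pderivList {k : ℕ} {E : Type} [NormedAddCommGroup E] [NormedSpace ℂ E] :
    List (Fin k) → ((Fin k → ℂ) → E) → ((Fin k → ℂ) → E)
  | [], f => f
  | j :: L, f => fun u => fderiv ℂ (pderivList L f) u (Pi.single j 1)

/-- The canonical list of coordinate directions attached to a multi-index `I : Fin k → ℕ`
(the direction `j` repeated `I j` times). -/
def idxList {k : ℕ} (I : Fin k → ℕ) : List (Fin k) :=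
  (List.finRange k).flatMap fun j => List.replicate (I j) j

/-- The partial derivative `∂^I f = ∂^{|I|} f / ∂u₁^{i₁} ⋯ ∂u_k^{i_k}`. -/
def pd {k : ℕ} {E : Type} [NormedAddCommGroup E] [NormedSpace ℂ E]
    (I : Fin k → ℕ) (f : (Fin k → ℂ) → E) : (Fin k → ℂ) → E :=
  pderivList (idxList I) f

/-- The finset of multi-indices `I : Fin k → ℕ` of total degree `|I| ≤ r`. -/
def degLE (k r : ℕ) : Finset (Fin k → ℕ) :=
  (Finset.Iic fun _ : Fin k => r).filter fun I => (∑ j, I j) ≤ r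

/-- The finset of multi-indices `I : Fin k → ℕ` of total degree `|I| = r`. -/
def degEq (k r : ℕ) : Finset (Fin k → ℕ) :=
  (Finset.Iic fun _ : Fin k => r).filter fun I => (∑ j, I j) = r

/-- The lift `x̂(u) = (1, x(u))` of the parametrisation `x` to the affine cone `ℂ^{N+1}`. -/
def coneLift {k N : ℕ} (x : (Fin k → ℂ) → (Fin N → ℂ)) : (Fin k → ℂ) → (Fin (N + 1) → ℂ) :=
  fun u => Fin.cons 1 (x u)

/-- `osc x̂ s u` is the affine cone `T^(s)(u)` over the `s`-th osculating space at the point of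
parameter `u`: the span of all partial derivatives `x̂^I(u)` with `|I| ≤ s`. -/
def osc {k N : ℕ} (xhat : (Fin k → ℂ) → (Fin (N + 1) → ℂ)) (s : ℕ) (u : Fin k → ℂ) :
    Submodule ℂ (Fin (N + 1) → ℂ) :=
  Submodule.span ℂ {y | ∃ I : Fin k → ℕ, (∑ j, I j) ≤ s ∧ y = pd I xhat u}

/-- The degree-`r` form `F^r_ξ(v) = ξ(D^r x̂(u₀)(v,…,v))`, as a function of `v ∈ ℂ^k`. -/
def formOf {k N : ℕ} (xhat : (Fin k → ℂ) → (Fin (N + 1) → ℂ)) (u₀ : Fin k → ℂ) (r : ℕ)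
    (ξ : Module.Dual ℂ (Fin (N + 1) → ℂ)) : (Fin k → ℂ) → ℂ :=
  fun v => ξ (iteratedFDeriv ℂ r xhat u₀ fun _ => v)

/-- The `r`-th fundamental form `|I^r|` of `V` at `P`, as the set of the forms `F^r_ξ` for `ξ`
a linear functional vanishing on `T^(r-1)(u₀)`. -/
def fundSet {k N : ℕ} (xhat : (Fin k → ℂ) → (Fin (N + 1) → ℂ)) (u₀ : Fin k → ℂ) (r : ℕ) :
    Set ((Fin k → ℂ) → ℂ) :=
  { F | ∃ ξ : Module.Dual ℂ (Fin (N + 1) → ℂ),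
      (∀ y ∈ osc xhat (r - 1) u₀, ξ y = 0) ∧ F = formOf xhat u₀ r ξ }

/-- The `r`-th fundamental form `|I^r|` as a subspace of the space of functions of `v`. -/
def fundForm {k N : ℕ} (xhat : (Fin k → ℂ) → (Fin (N + 1) → ℂ)) (u₀ : Fin k → ℂ) (r : ℕ) :
    Submodule ℂ ((Fin k → ℂ) → ℂ) :=
  Submodule.span ℂ (fundSet xhat u₀ r)

/-- The linear map sending the coefficients `(E_I)_{|I|=t}` of a degree-`t` form to
`∑_{|I|=t} E_I x̂^I(u₀) ∈ ℂ^{N+1}`; a form is the symbol of a Laplace equation of order `t`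
iff its coefficients are mapped into `T^(t-1)(u₀)`. -/
def symbolMap {k N : ℕ} (xhat : (Fin k → ℂ) → (Fin (N + 1) → ℂ)) (u₀ : Fin k → ℂ) (t : ℕ) :
    ({I : Fin k → ℕ // I ∈ degEq k t} → ℂ) →ₗ[ℂ] (Fin (N + 1) → ℂ) where
  toFun E := ∑ I : {I : Fin k → ℕ // I ∈ degEq k t}, E I • pd I.1 xhat u₀
  map_add' a b := by simp [add_smul, Finset.sum_add_distrib]
  map_smul' c a := by simp [smul_smul, Finset.smul_sum]

/-- The parametrisation `Φ_t(u, λ) = ∑_{|I| ≤ t} λ_I x̂^I(u)` of the affine cone over the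
`t`-th osculating variety `Tan^t(V)`. -/
def tanPhi {k N : ℕ} (xhat : (Fin k → ℂ) → (Fin (N + 1) → ℂ)) (t : ℕ) :
    ((Fin k → ℂ) × ({I : Fin k → ℕ // I ∈ degLE k t} → ℂ)) → (Fin (N + 1) → ℂ) :=
  fun p => ∑ I : {I : Fin k → ℕ // I ∈ degLE k t}, p.2 I • pd I.1 xhat p.1

/-- The rank of the Jacobian matrix of a linear system `S` of degree-`r` forms:
the maximum over `v ∈ ℂ^k` of the dimension of the span of the gradients at `v`
of the members of `S`. -/
def jacRank (k : ℕ) (S : Set ((Fin k → ℂ) → ℂ)) : ℕ :=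
  sSup {r : ℕ | ∃ v : Fin k → ℂ,
    r = Module.finrank ℂ
      ↥(Submodule.span ℂ {g : Fin k → ℂ | ∃ F ∈ S, g = fun j => pd (Pi.single j 1) F v})}

/-- The coefficients of the reducible degree-`(t+1)` form
`(∑_j w_j v_j) · (∑_{|I| = t} λ_I v^I)`. -/
def prodSymb {k : ℕ} (t : ℕ) (w : Fin k → ℂ) (lam : {I : Fin k → ℕ // I ∈ degLE k t} → ℂ)
    (J : Fin k → ℕ) : ℂ :=
  ∑ j : Fin k,
    if h : 1 ≤ J j ∧ (J - Pi.single j 1 : Fin k → ℕ) ∈ degLE k t ∧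
        (∑ i, (J - Pi.single j 1 : Fin k → ℕ) i) = t
    then w j * lam ⟨(J - Pi.single j 1 : Fin k → ℕ), h.2.1⟩ else 0


/- By the product rule, `DB(u₀)(w) = ∑_I (Dc_I(u₀)(w) x̂^I(u₀) + c_I(u₀) Dx̂^I(u₀)(w))`.
The first terms lie in `T^(t-1)(u₀)`, and by equality of mixed partials
`Dx̂^I(u₀)(e_j) = x̂^{I + e_j}(u₀)` with `|I + e_j| ≤ t`. -/

open scoped ContDiff

section Pderiv

variable {k : ℕ} {E : Type} [NormedAddCommGroup E] [NormedSpace ℂ E] {U : Set (Fin k → ℂ)}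
  {f : (Fin k → ℂ) → E}

theorem contDiffOn_pderivList (hU : IsOpen U) (hf : ContDiffOn ℂ ∞ f U) (L : List (Fin k)) :
    ContDiffOn ℂ ∞ (pderivList L f) U := by
  induction L with
  | nil => exact hf
  | cons j L ih => exact (ih.fderiv_of_isOpen hU le_rfl).clm_apply contDiffOn_const

theorem pderivList_cons_cons {a b : Fin k} {L : List (Fin k)} {u : Fin k → ℂ}
    (h : DifferentiableAt ℂ (fderiv ℂ (pderivList L f)) u) :
    pderivList (a :: b :: L) f u =
      fderiv ℂ (fderiv ℂ (pderivList L f)) u (Pi.single a 1) (Pi.single b 1) := by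
  change fderiv ℂ (fun v => fderiv ℂ (pderivList L f) v (Pi.single b 1)) u (Pi.single a 1) = _
  simp [fderiv_clm_apply h (differentiableAt_const _)]

theorem pderivList_swap (hU : IsOpen U) (hf : ContDiffOn ℂ ∞ f U) (a b : Fin k)
    (L : List (Fin k)) {u : Fin k → ℂ} (hu : u ∈ U) :
    pderivList (a :: b :: L) f u = pderivList (b :: a :: L) f u := by
  have hg : ContDiffAt ℂ ∞ (pderivList L f) u :=
    (contDiffOn_pderivList hU hf L).contDiffAt (hU.mem_nhds hu)
  have hdiff : DifferentiableAt ℂ (fderiv ℂ (pderivList L f)) u :=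
    (hg.fderiv_right (m := 1) (by norm_cast)).differentiableAt one_ne_zero
  have hsymm : IsSymmSndFDerivAt ℂ (pderivList L f) u :=
    hg.isSymmSndFDerivAt (by rw [minSmoothness_of_isRCLikeNormedField]; norm_cast)
  rw [pderivList_cons_cons hdiff, pderivList_cons_cons hdiff, hsymm.eq]

theorem pderivList_perm (hU : IsOpen U) (hf : ContDiffOn ℂ ∞ f U) {L₁ L₂ : List (Fin k)}
    (hp : L₁.Perm L₂) {u : Fin k → ℂ} (hu : u ∈ U) :
    pderivList L₁ f u = pderivList L₂ f u := by
  induction hp generalizing u with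
  | nil => rfl
  | cons a _ ih =>
    have h : pderivList _ f =ᶠ[nhds u] pderivList _ f :=
      Filter.eventuallyEq_of_mem (hU.mem_nhds hu) fun v hv => ih hv
    simp only [pderivList, h.fderiv_eq]
  | swap a b L => exact pderivList_swap hU hf b a L hu
  | trans _ _ ih₁ ih₂ => exact (ih₁ hu).trans (ih₂ hu)

theorem count_idxList (I : Fin k → ℕ) (a : Fin k) : (idxList I).count a = I a := by
  simp [idxList, List.count_flatMap, List.count_replicate, ← Fin.sum_univ_def]

theorem idxList_add_single_perm (I : Fin k → ℕ) (j : Fin k) :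
    (idxList (I + Pi.single j 1)).Perm (j :: idxList I) := by
  rw [List.perm_iff_count]
  intro a
  by_cases h : a = j <;> simp [count_idxList, h, Ne.symm]

theorem fderiv_pd_single (hU : IsOpen U) (hf : ContDiffOn ℂ ∞ f U) (I : Fin k → ℕ) (j : Fin k)
    {u : Fin k → ℂ} (hu : u ∈ U) :
    fderiv ℂ (pd I f) u (Pi.single j 1) = pd (I + Pi.single j 1) f u :=
  (pderivList_perm hU hf (idxList_add_single_perm I j) hu).symm

theorem differentiableAt_pd (hU : IsOpen U) (hf : ContDiffOn ℂ ∞ f U) (I : Fin k → ℕ)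
    {u : Fin k → ℂ} (hu : u ∈ U) : DifferentiableAt ℂ (pd I f) u :=
  ((contDiffOn_pderivList hU hf _).contDiffAt (hU.mem_nhds hu)).differentiableAt (by simp)

end Pderiv

theorem sum_le_of_mem_degLE {k r : ℕ} {I : Fin k → ℕ} (hI : I ∈ degLE k r) : ∑ j, I j ≤ r :=
  (Finset.mem_filter.1 hI).2

theorem contDiffOn_coneLift {k N : ℕ} {U : Set (Fin k → ℂ)} {x : (Fin k → ℂ) → (Fin N → ℂ)}
    (hx : ContDiffOn ℂ ∞ x U) : ContDiffOn ℂ ∞ (coneLift x) U := by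
  refine contDiffOn_pi.2 fun i => Fin.cases ?_ (fun i => ?_) i
  · simpa [coneLift] using contDiffOn_const
  · simpa [coneLift] using contDiffOn_pi.1 hx i

section Osc

variable {k N : ℕ} {xhat : (Fin k → ℂ) → (Fin (N + 1) → ℂ)}

theorem pd_mem_osc {s : ℕ} {I : Fin k → ℕ} (hI : ∑ j, I j ≤ s) (u : Fin k → ℂ) :
    pd I xhat u ∈ osc xhat s u :=
  Submodule.subset_span ⟨I, hI, rfl⟩

theorem fderiv_pd_apply_mem_osc {U : Set (Fin k → ℂ)} (hU : IsOpen U)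
    (hxhat : ContDiffOn ℂ ∞ xhat U) {s : ℕ} {I : Fin k → ℕ} (hI : ∑ j, I j + 1 ≤ s)
    {u : Fin k → ℂ} (hu : u ∈ U) (w : Fin k → ℂ) :
    fderiv ℂ (pd I xhat) u w ∈ osc xhat s u := by
  rw [pi_eq_sum_univ' w, map_sum]
  refine Submodule.sum_mem _ fun j _ => ?_
  rw [map_smul, fderiv_pd_single hU hxhat I j hu]
  refine Submodule.smul_mem _ _ (pd_mem_osc ?_ u)
  simpa [Finset.sum_add_distrib] using hI

end Osc

theorem fderiv_sum_smul_apply_mem {𝕜 F E ι : Type*} [NontriviallyNormedField 𝕜]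
    [NormedAddCommGroup F] [NormedSpace 𝕜 F] [NormedAddCommGroup E] [NormedSpace 𝕜 E]
    {s : Finset ι} {c : ι → F → 𝕜} {g : ι → F → E} {u w : F} {W : Submodule 𝕜 E}
    (hc : ∀ i ∈ s, DifferentiableAt 𝕜 (c i) u) (hg : ∀ i ∈ s, DifferentiableAt 𝕜 (g i) u)
    (hgW : ∀ i ∈ s, g i u ∈ W) (hdgW : ∀ i ∈ s, fderiv 𝕜 (g i) u w ∈ W) :
    fderiv 𝕜 (fun v => ∑ i ∈ s, c i v • g i v) u w ∈ W := by
  rw [fderiv_fun_sum (A := fun i v => c i v • g i v) fun i hi => (hc i hi).smul (hg i hi)]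
  simp only [FunLike.coe_sum, Finset.sum_apply]
  refine Submodule.sum_mem _ fun i hi => ?_
  rw [fderiv_fun_smul (hc i hi) (hg i hi)]
  exact W.add_mem (W.smul_mem _ (hdgW i hi)) (W.smul_mem _ (hgW i hi))

theorem deriv_of_osculating_section_mem_osc_general (k N t : ℕ) (ht : 1 ≤ t)
    (U : Set (Fin k → ℂ)) (hU : IsOpen U) (u₀ : Fin k → ℂ) (hu₀ : u₀ ∈ U)
    (x : (Fin k → ℂ) → (Fin N → ℂ)) (hx : ContDiffOn ℂ (⊤ : ℕ∞) x U)
    (c : (Fin k → ℕ) → (Fin k → ℂ) → ℂ)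
    (hc : ∀ I : Fin k → ℕ, (∑ j, I j) ≤ t - 1 → DifferentiableAt ℂ (c I) u₀) :
    ∀ w : Fin k → ℂ,
      fderiv ℂ (fun u => ∑ I ∈ degLE k (t - 1), c I u • pd I (coneLift x) u) u₀ w ∈
        osc (coneLift x) t u₀ := by
  intro w
  have hxhat := contDiffOn_coneLift hx
  refine fderiv_sum_smul_apply_mem (fun I hI => hc I (sum_le_of_mem_degLE hI))
    (fun I _ => differentiableAt_pd hU hxhat I hu₀)
    (fun I hI => pd_mem_osc ((sum_le_of_mem_degLE hI).trans (Nat.sub_le t 1)) u₀)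
    (fun I hI => fderiv_pd_apply_mem_osc hU hxhat ?_ hu₀ w)
  have := sum_le_of_mem_degLE hI
  omega

/-- The tangent cone to the osculating variety `Tan^{t-1}(V)` at `P` is contained in the
`t`-th osculating space: the derivative of any differentiable map
`B(u) = ∑_{|I| ≤ t-1} c_I(u) x̂^I(u)` at `u₀` lands in `T^(t)(u₀)`. -/
theorem deriv_of_osculating_section_mem_osc (k N t : ℕ) (hk : 1 ≤ k) (hN : 1 ≤ N) (ht : 1 ≤ t)
    (U : Set (Fin k → ℂ)) (hU : IsOpen U) (u₀ : Fin k → ℂ) (hu₀ : u₀ ∈ U)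
    (x : (Fin k → ℂ) → (Fin N → ℂ)) (hx : ContDiffOn ℂ (⊤ : ℕ∞) x U)
    (c : (Fin k → ℕ) → (Fin k → ℂ) → ℂ)
    (hc : ∀ I : Fin k → ℕ, (∑ j, I j) ≤ t - 1 → DifferentiableAt ℂ (c I) u₀) :
    ∀ w : Fin k → ℂ,
      fderiv ℂ (fun u => ∑ I ∈ degLE k (t - 1), c I u • pd I (coneLift x) u) u₀ w ∈
        osc (coneLift x) t u₀ :=
  deriv_of_osculating_section_mem_osc_general k N t ht U hU u₀ hu₀ x hx c hc

end
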